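/- arXiv:2001.10650 — 3 statements merged into one kernel-verified Lean document; each statement's English description precedes it below -/
import Mathlib

section
/- For all i,j ≥ 0 the coefficients f_{i,j} satisfy ((j+1)/√((2j+1)(2j+3))) f_{i,j+1} + f_{i,j} + (j/√((2j−1)(2j+1))) f_{i,j−1} = (2(i+1)/√((2i+1)(2i+3))) f_{i+1,j} + (2i/√((2i−1)(2i+1))) f_{i−1,j}, where when i = 0 (resp. j = 0) the term containing f_{i−1,j} (resp. f_{i,j−1}) is interpreted as 0 (its coefficient vanishes). -/
/-!
Multiplication by `X` is self-adjoint for `⟨p, q⟩ = ∫_{-1}^1 p q`, so an orthonormal polynomial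
sequence satisfies a three-term recurrence
`X p̂_m = a_m p̂_{m+1} + b_m p̂_m + a_{m-1} p̂_{m-1}` with `a_m = lc p̂_m / lc p̂_{m+1}`.
Here `b_m = 0` by parity, and the leading coefficients are found by comparing `p̂_n` with the
Rodrigues polynomial `Dⁿ (X² - 1)ⁿ`, which is orthogonal to all lower degrees by `n` integrations
by parts; this gives `a_m = (m+1)/√((2m+1)(2m+3))`. Applying the recurrence to `p̂_j` at `2t - 1`
and to `p̂_i` at `t` turns both sides of the identity into `∫_0^1 2t p̂_i(t) p̂_j(2t-1) dt`.
-/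

open MeasureTheory Polynomial Finset intervalIntegral

structure IsOrthonormalPolySeq {K : Type*} [Field K] (B : LinearMap.BilinForm K K[X])
    (P : ℕ → K[X]) : Prop where
  natDegree_eq : ∀ n, (P n).natDegree = n
  apply_eq : ∀ k l, B (P k) (P l) = if k = l then 1 else 0

namespace IsOrthonormalPolySeq

variable {K : Type*} [Field K] {B : LinearMap.BilinForm K K[X]} {P : ℕ → K[X]}

theorem ne_zero (hP : IsOrthonormalPolySeq B P) (n : ℕ) : P n ≠ 0 := by
  intro h
  simpa [h] using hP.apply_eq n n

theorem degree_eq (hP : IsOrthonormalPolySeq B P) (n : ℕ) : (P n).degree = n := by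
  rw [degree_eq_natDegree (hP.ne_zero n), hP.natDegree_eq]

theorem eq_sum_of_degree_lt (hP : IsOrthonormalPolySeq B P) {n : ℕ} {p : K[X]}
    (hp : p.degree < n) : p = ∑ k ∈ range n, B p (P k) • P k := by
  induction n generalizing p with
  | zero => simpa using hp
  | succ n ih =>
    have hlead : (P n).coeff n ≠ 0 := by
      have := leadingCoeff_ne_zero.mpr (hP.ne_zero n)
      rwa [leadingCoeff, hP.natDegree_eq] at this
    set c := p.coeff n / (P n).coeff n
    have hq : (p - c • P n).degree < n := by
      rw [degree_lt_iff_coeff_zero]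
      intro m hm
      rcases hm.eq_or_lt with rfl | hm
      · simp [c, hlead]
      · have hpm : p.coeff m = 0 := (degree_lt_iff_coeff_zero _ _).mp hp m hm
        have hPm : (P n).coeff m = 0 :=
          coeff_eq_zero_of_natDegree_lt (by rw [hP.natDegree_eq]; omega)
        simp [hpm, hPm]
    have hB : ∀ k < n, B (p - c • P n) (P k) = B p (P k) := fun k hk => by
      simp [hP.apply_eq, hk.ne']
    have hc : B p (P n) = c := by
      simpa [hP.apply_eq, sub_eq_zero] using congrArg (B · (P n)) (ih hq)
    calc p = (p - c • P n) + c • P n := by abel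
      _ = _ := by
        rw [ih hq, sum_range_succ, hc]
        congr 1
        exact sum_congr rfl fun k hk => by rw [hB k (mem_range.mp hk)]

theorem apply_eq_zero_of_degree_lt (hP : IsOrthonormalPolySeq B P) {n : ℕ} {p : K[X]}
    (hp : p.degree < n) : B p (P n) = 0 := by
  rw [hP.eq_sum_of_degree_lt hp]
  simp [hP.apply_eq]

theorem coeff_eq (hP : IsOrthonormalPolySeq B P) {n : ℕ} {p : K[X]} (hp : p.degree ≤ n) :
    p.coeff n = B p (P n) * (P n).leadingCoeff := by
  conv_lhs =>
    rw [hP.eq_sum_of_degree_lt (n := n + 1) (hp.trans_lt (by exact_mod_cast n.lt_succ_self))]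
  rw [finsetSum_coeff, sum_range_succ, sum_eq_zero, zero_add, coeff_smul, smul_eq_mul,
    leadingCoeff, hP.natDegree_eq]
  intro k hk
  rw [coeff_smul, coeff_eq_zero_of_natDegree_lt (by rw [hP.natDegree_eq]; exact mem_range.mp hk),
    smul_zero]

theorem eq_smul_of_forall_apply_eq_zero (hP : IsOrthonormalPolySeq B P) {n : ℕ} {q : K[X]}
    (hq : q.degree ≤ n) (h : ∀ k < n, B q (P k) = 0) : q = B q (P n) • P n := by
  conv_lhs =>
    rw [hP.eq_sum_of_degree_lt (n := n + 1) (hq.trans_lt (by exact_mod_cast n.lt_succ_self))]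
  rw [sum_range_succ, sum_eq_zero fun k hk => by rw [h k (mem_range.mp hk), zero_smul], zero_add]

theorem degree_X_mul_le (hP : IsOrthonormalPolySeq B P) (n : ℕ) :
    (X * P n).degree ≤ ↑(n + 1) :=
  degree_le_of_natDegree_le <|
    natDegree_mul_le.trans (by rw [natDegree_X, hP.natDegree_eq, add_comm])

theorem apply_X_mul_mul_leadingCoeff (hP : IsOrthonormalPolySeq B P) (n : ℕ) :
    B (X * P n) (P (n + 1)) * (P (n + 1)).leadingCoeff = (P n).leadingCoeff := by
  rw [← hP.coeff_eq (hP.degree_X_mul_le n), coeff_X_mul, leadingCoeff, hP.natDegree_eq]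

theorem apply_X_mul_eq_zero (hP : IsOrthonormalPolySeq B P) (hB : B.IsSymm)
    (hX : ∀ p q, B (X * p) q = B p (X * q)) {m k : ℕ} (hk : k + 1 < m) :
    B (X * P m) (P k) = 0 := by
  rw [hX, hB.eq,
    hP.apply_eq_zero_of_degree_lt ((hP.degree_X_mul_le k).trans_lt (by exact_mod_cast hk))]

theorem X_mul_zero (hP : IsOrthonormalPolySeq B P) :
    X * P 0 = B (X * P 0) (P 1) • P 1 + B (X * P 0) (P 0) • P 0 := by
  conv_lhs => rw [hP.eq_sum_of_degree_lt (n := 2) ((hP.degree_X_mul_le 0).trans_lt (by norm_num))]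
  simp [sum_range_succ, add_comm]

theorem X_mul_succ (hP : IsOrthonormalPolySeq B P) (hB : B.IsSymm)
    (hX : ∀ p q, B (X * p) q = B p (X * q)) (m : ℕ) :
    X * P (m + 1) = B (X * P (m + 1)) (P (m + 2)) • P (m + 2)
      + B (X * P (m + 1)) (P (m + 1)) • P (m + 1) + B (X * P m) (P (m + 1)) • P m := by
  conv_lhs => rw [hP.eq_sum_of_degree_lt (n := m + 3)
    ((hP.degree_X_mul_le _).trans_lt (by exact_mod_cast (m + 2).lt_succ_self))]
  rw [sum_range_succ, sum_range_succ, sum_range_succ,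
    sum_eq_zero fun k hk => by
      rw [hP.apply_X_mul_eq_zero hB hX (by have := mem_range.mp hk; omega), zero_smul],
    hX, hB.eq]
  abel

end IsOrthonormalPolySeq

theorem Polynomial.intervalIntegrable_eval_mul_eval_comp (p q : ℝ[X]) (u : C(ℝ, ℝ)) (a b : ℝ) :
    IntervalIntegrable (fun t => p.eval t * q.eval (u t)) volume a b :=
  (p.continuous.mul (q.continuous.comp u.continuous)).intervalIntegrable a b

noncomputable def polyIntegralForm (a b : ℝ) (u : C(ℝ, ℝ)) : LinearMap.BilinForm ℝ ℝ[X] :=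
  LinearMap.mk₂ ℝ (fun p q => ∫ t in a..b, p.eval t * q.eval (u t))
    (fun p₁ p₂ q => by
      simp only [eval_add, add_mul]
      exact integral_add (intervalIntegrable_eval_mul_eval_comp _ _ _ _ _)
        (intervalIntegrable_eval_mul_eval_comp _ _ _ _ _))
    (fun c p q => by
      simp only [eval_smul, smul_eq_mul, mul_assoc, intervalIntegral.integral_const_mul])
    (fun p q₁ q₂ => by
      simp only [eval_add, mul_add]
      exact integral_add (intervalIntegrable_eval_mul_eval_comp _ _ _ _ _)
        (intervalIntegrable_eval_mul_eval_comp _ _ _ _ _))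
    (fun c p q => by
      simp only [eval_smul, smul_eq_mul, mul_left_comm _ c, intervalIntegral.integral_const_mul])

theorem polyIntegralForm_apply (a b : ℝ) (u : C(ℝ, ℝ)) (p q : ℝ[X]) :
    polyIntegralForm a b u p q = ∫ t in a..b, p.eval t * q.eval (u t) := rfl

theorem polyIntegralForm_mul_right (a b : ℝ) (u : C(ℝ, ℝ)) {r s : ℝ[X]}
    (h : ∀ t, r.eval (u t) = s.eval t) (p q : ℝ[X]) :
    polyIntegralForm a b u p (r * q) = polyIntegralForm a b u (s * p) q := by
  simp only [polyIntegralForm_apply, eval_mul, h]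
  congr 1 with t
  ring

noncomputable def legendreForm : LinearMap.BilinForm ℝ ℝ[X] :=
  polyIntegralForm (-1) 1 (ContinuousMap.id ℝ)

theorem legendreForm_apply (p q : ℝ[X]) :
    legendreForm p q = ∫ t in (-1)..1, p.eval t * q.eval t := rfl

theorem legendreForm_isSymm : legendreForm.IsSymm :=
  ⟨fun p q => by simp only [legendreForm_apply, mul_comm]⟩

theorem legendreForm_X_mul (p q : ℝ[X]) : legendreForm (X * p) q = legendreForm p (X * q) :=
  polyIntegralForm_mul_right _ _ _ (fun _ => rfl) _ _ |>.symm

theorem legendreForm_comp_neg_X (p q : ℝ[X]) :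
    legendreForm (p.comp (-X)) (q.comp (-X)) = legendreForm p q := by
  simpa [legendreForm_apply] using integral_comp_neg (a := -1) (b := 1) fun t => p.eval t * q.eval t

theorem legendreForm_derivative {q : ℝ[X]} (h₁ : q.IsRoot 1) (h₂ : q.IsRoot (-1)) (p : ℝ[X]) :
    legendreForm p (derivative q) = -legendreForm (derivative p) q := by
  have := integral_mul_deriv_eq_deriv_mul (a := -1) (b := 1) (fun t _ => p.hasDerivAt t)
    (fun t _ => q.hasDerivAt t) ((derivative p).continuous.intervalIntegrable _ _)
    ((derivative q).continuous.intervalIntegrable _ _)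
  simp_all [legendreForm_apply, IsRoot]

theorem Polynomial.iterate_derivative_comp_neg_X {R : Type*} [CommRing R] (p : R[X]) (k : ℕ) :
    derivative^[k] (p.comp (-X)) = (-1 : R) ^ k • (derivative^[k] p).comp (-X) := by
  induction k generalizing p with
  | zero => simp
  | succ k ih => simp [ih (derivative p), derivative_comp, pow_succ]

noncomputable def rodrigues (n : ℕ) : ℝ[X] := derivative^[n] ((X ^ 2 - 1) ^ n)

theorem isRoot_iterate_derivative_X_sq_sub_one_pow {R : Type*} [CommRing R] {n k : ℕ}
    (hk : k < n) {t : R} (ht : t ^ 2 = 1) : (derivative^[k] ((X ^ 2 - 1 : R[X]) ^ n)).IsRoot t := by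
  refine IsRoot.dvd ?_ (pow_sub_dvd_iterate_derivative_of_pow_dvd k dvd_rfl)
  simp [IsRoot, ht, Nat.sub_ne_zero_of_lt hk]

theorem legendreForm_iterate_derivative_X_sq_sub_one_pow {n k : ℕ} (hk : k ≤ n) (p : ℝ[X]) :
    legendreForm p (derivative^[k] ((X ^ 2 - 1) ^ n))
      = (-1) ^ k * legendreForm (derivative^[k] p) ((X ^ 2 - 1) ^ n) := by
  induction k generalizing p with
  | zero => simp
  | succ k ih =>
    rw [Function.iterate_succ_apply', legendreForm_derivative
      (isRoot_iterate_derivative_X_sq_sub_one_pow hk (one_pow 2))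
      (isRoot_iterate_derivative_X_sq_sub_one_pow hk neg_one_sq), ih (by omega),
      ← Function.iterate_succ_apply, pow_succ]
    ring

theorem legendreForm_rodrigues (n : ℕ) (p : ℝ[X]) :
    legendreForm p (rodrigues n) = (-1) ^ n * legendreForm (derivative^[n] p) ((X ^ 2 - 1) ^ n) :=
  legendreForm_iterate_derivative_X_sq_sub_one_pow le_rfl p

theorem legendreForm_rodrigues_eq_zero {n : ℕ} {p : ℝ[X]} (hp : p.degree < n) :
    legendreForm p (rodrigues n) = 0 := by
  simp [legendreForm_rodrigues, iterate_derivative_eq_zero_of_degree_lt hp]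

theorem monic_X_sq_sub_one {R : Type*} [CommRing R] : (X ^ 2 - 1 : R[X]).Monic := by
  simpa using monic_X_pow_sub_C (1 : R) two_ne_zero

theorem natDegree_X_sq_sub_one_pow {R : Type*} [CommRing R] [Nontrivial R] (n : ℕ) :
    ((X ^ 2 - 1 : R[X]) ^ n).natDegree = 2 * n := by
  rw [monic_X_sq_sub_one.natDegree_pow, ← C_1, natDegree_X_pow_sub_C, mul_comm]

theorem degree_rodrigues_le (n : ℕ) : (rodrigues n).degree ≤ n := by
  refine degree_le_of_natDegree_le ((natDegree_iterate_derivative _ n).trans ?_)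
  rw [natDegree_X_sq_sub_one_pow]
  omega

theorem coeff_rodrigues (n : ℕ) : (rodrigues n).coeff n = (2 * n).descFactorial n := by
  have h := (monic_X_sq_sub_one.pow n : ((X ^ 2 - 1 : ℝ[X]) ^ n).Monic).coeff_natDegree
  rw [natDegree_X_sq_sub_one_pow] at h
  rw [rodrigues, coeff_iterate_derivative, ← two_mul, h, nsmul_one]

theorem coeff_rodrigues_succ (n : ℕ) :
    (rodrigues (n + 1)).coeff (n + 1) = 2 * (2 * n + 1) * (rodrigues n).coeff n := by
  have h₁ := Nat.succ_descFactorial_succ (2 * n + 1) n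
  have h₂ := Nat.succ_descFactorial (2 * n) n
  rw [show 2 * n + 1 - n = n + 1 by omega] at h₂
  rw [coeff_rodrigues, coeff_rodrigues, show 2 * (n + 1) = 2 * n + 1 + 1 by ring, h₁]
  have h₂' : ((n + 1) * (2 * n + 1).descFactorial n : ℝ)
      = (2 * n + 1) * (2 * n).descFactorial n := by
    exact_mod_cast h₂
  push_cast
  linear_combination 2 * h₂'

theorem coeff_rodrigues_pos (n : ℕ) : 0 < (rodrigues n).coeff n := by
  rw [coeff_rodrigues]
  exact_mod_cast Nat.pos_of_ne_zero (by rw [Ne, Nat.descFactorial_eq_zero_iff_lt]; omega)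

theorem rodrigues_comp_neg_X (n : ℕ) :
    (rodrigues n).comp (-X) = (-1 : ℝ) ^ n • rodrigues n := by
  have h := iterate_derivative_comp_neg_X ((X ^ 2 - 1 : ℝ[X]) ^ n) n
  rw [show ((X ^ 2 - 1 : ℝ[X]) ^ n).comp (-X) = (X ^ 2 - 1) ^ n by simp] at h
  rw [rodrigues]
  nth_rw 2 [h]
  rw [smul_smul, ← pow_add, ← two_mul, pow_mul]
  simp

theorem legendreForm_one_X_sq_sub_one_pow_succ (n : ℕ) :
    (2 * n + 3) * legendreForm 1 ((X ^ 2 - 1) ^ (n + 1))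
      = -(2 * n + 2) * legendreForm 1 ((X ^ 2 - 1) ^ n) := by
  have hderiv : derivative (X * (X ^ 2 - 1 : ℝ[X]) ^ (n + 1))
      = (2 * n + 3 : ℝ) • (X ^ 2 - 1) ^ (n + 1) + (2 * n + 2 : ℝ) • (X ^ 2 - 1) ^ n := by
    simp only [derivative_mul, derivative_X, derivative_pow_succ, derivative_sub, derivative_one,
      smul_eq_C_mul, map_add, map_mul, map_natCast, map_ofNat, map_one]
    ring
  have := legendreForm_derivative (q := X * (X ^ 2 - 1 : ℝ[X]) ^ (n + 1)) (by simp) (by simp) 1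
  rw [hderiv, derivative_one, map_zero, LinearMap.zero_apply, neg_zero, map_add, map_smul,
    map_smul, smul_eq_mul, smul_eq_mul] at this
  linear_combination this

theorem legendreForm_X_pow_rodrigues (n : ℕ) :
    legendreForm (X ^ n) (rodrigues n)
      = (-1) ^ n * n.factorial * legendreForm 1 ((X ^ 2 - 1) ^ n) := by
  rw [legendreForm_rodrigues, iterate_derivative_X_pow_eq_C_mul, Nat.sub_self, pow_zero,
    mul_one, Nat.descFactorial_self, ← mul_one (C _), C_mul', map_smul, LinearMap.smul_apply,
    smul_eq_mul, mul_assoc]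

theorem legendreForm_X_pow_rodrigues_succ (n : ℕ) :
    (2 * n + 3) * legendreForm (X ^ (n + 1)) (rodrigues (n + 1))
      = (n + 1) * (2 * n + 2) * legendreForm (X ^ n) (rodrigues n) := by
  rw [legendreForm_X_pow_rodrigues, legendreForm_X_pow_rodrigues, Nat.factorial_succ, pow_succ]
  push_cast
  linear_combination
    (-(-1) ^ n * (n + 1) * n.factorial : ℝ) * legendreForm_one_X_sq_sub_one_pow_succ n

namespace IsOrthonormalPolySeq

variable {P : ℕ → ℝ[X]}

theorem rodrigues_eq_smul (hP : IsOrthonormalPolySeq legendreForm P) (n : ℕ) :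
    rodrigues n = legendreForm (rodrigues n) (P n) • P n :=
  hP.eq_smul_of_forall_apply_eq_zero (degree_rodrigues_le n) fun k hk => by
    rw [legendreForm_isSymm.eq,
      legendreForm_rodrigues_eq_zero (by rw [hP.degree_eq]; exact_mod_cast hk)]

theorem comp_neg_X (hP : IsOrthonormalPolySeq legendreForm P) (n : ℕ) :
    (P n).comp (-X) = (-1 : ℝ) ^ n • P n := by
  obtain ⟨ρ, hR⟩ : ∃ ρ : ℝ, rodrigues n = ρ • P n := ⟨_, hP.rodrigues_eq_smul n⟩
  have hρ : ρ ≠ 0 := by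
    rintro rfl
    simpa [hR] using coeff_rodrigues_pos n
  have h := rodrigues_comp_neg_X n
  rw [hR, smul_comp, smul_comm] at h
  exact smul_right_injective _ hρ h

theorem legendreForm_X_mul_self (hP : IsOrthonormalPolySeq legendreForm P) (n : ℕ) :
    legendreForm (X * P n) (P n) = 0 := by
  have h := legendreForm_comp_neg_X (X * P n) (P n)
  rw [mul_comp, X_comp, hP.comp_neg_X, neg_mul, mul_smul_comm] at h
  simp only [map_neg, map_smul, LinearMap.neg_apply, LinearMap.smul_apply, smul_eq_mul] at h
  have hε : ((-1 : ℝ) ^ n) ^ 2 = 1 := by rw [← pow_mul, mul_comm, pow_mul, neg_one_sq, one_pow]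
  linear_combination -h / 2 - legendreForm (X * P n) (P n) / 2 * hε

theorem leadingCoeff_sq_mul (hP : IsOrthonormalPolySeq legendreForm P) (n : ℕ) :
    (P n).leadingCoeff ^ 2 * legendreForm (X ^ n) (rodrigues n) = (rodrigues n).coeff n := by
  obtain ⟨ρ, hR⟩ : ∃ ρ : ℝ, rodrigues n = ρ • P n := ⟨_, hP.rodrigues_eq_smul n⟩
  have hX := hP.coeff_eq (degree_X_pow_le n)
  rw [coeff_X_pow_self, leadingCoeff, hP.natDegree_eq] at hX
  rw [hR, coeff_smul, map_smul, smul_eq_mul, smul_eq_mul, leadingCoeff, hP.natDegree_eq]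
  linear_combination (-(P n).coeff n * ρ) * hX

theorem legendreForm_X_mul_succ (hP : IsOrthonormalPolySeq legendreForm P)
    (hlead : ∀ n, 0 < (P n).leadingCoeff) (m : ℕ) :
    legendreForm (X * P m) (P (m + 1)) = (m + 1) / √((2 * m + 1) * (2 * m + 3)) := by
  -- `a = lc P_m / lc P_{m+1}`, and `lc P_n ^ 2 = κ_n / μ_n` with `κ_n` the leading coefficient of
  -- `R_n = rodrigues n` and `μ_n = ⟨Xⁿ, R_n⟩`; the recurrences for `κ` and `μ` then give `a ^ 2`.
  set a := legendreForm (X * P m) (P (m + 1))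
  have ha := hP.apply_X_mul_mul_leadingCoeff m
  have ha_pos : 0 < a := pos_of_mul_pos_left (ha ▸ hlead m) (hlead (m + 1)).le
  set Q := (P (m + 1)).leadingCoeff ^ 2 * legendreForm (X ^ m) (rodrigues m)
  have hQ :
      (2 * m + 1) * (2 * m + 3) * 2 * (rodrigues m).coeff m = (m + 1) * (2 * m + 2) * Q := by
    linear_combination -(2 * m + 3) * coeff_rodrigues_succ m
      - (2 * m + 3) * hP.leadingCoeff_sq_mul (m + 1)
      + (P (m + 1)).leadingCoeff ^ 2 * legendreForm_X_pow_rodrigues_succ m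
  have haQ : a ^ 2 * Q = (rodrigues m).coeff m := by
    rw [← hP.leadingCoeff_sq_mul m, ← ha]
    ring
  have hQ0 : Q ≠ 0 := fun h => (coeff_rodrigues_pos m).ne' (by rw [← haQ, h, mul_zero])
  have hsq : a ^ 2 * ((2 * m + 1) * (2 * m + 3)) = (m + 1) ^ 2 := by
    refine mul_right_cancel₀ hQ0 ?_
    linear_combination (2 * m + 1) * (2 * m + 3) * haQ + hQ / 2
  rw [eq_div_iff (by positivity), ← Real.sqrt_sq ha_pos.le, ← Real.sqrt_mul (sq_nonneg _), hsq,
    Real.sqrt_sq (by positivity)]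

theorem X_mul_eq (hP : IsOrthonormalPolySeq legendreForm P)
    (hlead : ∀ n, 0 < (P n).leadingCoeff) (m : ℕ) :
    X * P m = ((m + 1) / √((2 * m + 1) * (2 * m + 3))) • P (m + 1)
      + (m / √((2 * m - 1) * (2 * m + 1))) • P (m - 1) := by
  cases m with
  | zero =>
    rw [hP.X_mul_zero, hP.legendreForm_X_mul_self, hP.legendreForm_X_mul_succ hlead]
    simp
  | succ m =>
    rw [hP.X_mul_succ legendreForm_isSymm legendreForm_X_mul, hP.legendreForm_X_mul_self,
      hP.legendreForm_X_mul_succ hlead, hP.legendreForm_X_mul_succ hlead, zero_smul, add_zero,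
      Nat.add_sub_cancel]
    push_cast
    ring_nf

end IsOrthonormalPolySeq

/-- the discrete wave equation for the coefficients
`f i j = ∫_0^1 p̂_i(t) p̂_j(2t-1) dt` built from the orthonormal Legendre
polynomials. -/
theorem stmt_1
    (P : ℕ → Polynomial ℝ)
    (hdeg : ∀ n, (P n).natDegree = n)
    (hlead : ∀ n, 0 < (P n).leadingCoeff)
    (horth : ∀ k l, (∫ t in (-1:ℝ)..1, (P k).eval t * (P l).eval t) =
      if k = l then 1 else 0)
    (f : ℕ → ℕ → ℝ)
    (hf : ∀ i j, f i j = ∫ t in (0:ℝ)..1, (P i).eval t * (P j).eval (2 * t - 1)) :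
    ∀ i j : ℕ,
      ((j : ℝ) + 1) / Real.sqrt ((2 * (j : ℝ) + 1) * (2 * (j : ℝ) + 3)) * f i (j + 1)
        + f i j
        + (j : ℝ) / Real.sqrt ((2 * (j : ℝ) - 1) * (2 * (j : ℝ) + 1)) * f i (j - 1)
      = 2 * ((i : ℝ) + 1) / Real.sqrt ((2 * (i : ℝ) + 1) * (2 * (i : ℝ) + 3)) * f (i + 1) j
        + 2 * (i : ℝ) / Real.sqrt ((2 * (i : ℝ) - 1) * (2 * (i : ℝ) + 1)) * f (i - 1) j := by
  intro i j
  have hP : IsOrthonormalPolySeq legendreForm P := ⟨hdeg, horth⟩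
  set u : C(ℝ, ℝ) := ⟨fun t => 2 * t - 1, by fun_prop⟩
  have hF : ∀ i j, f i j = polyIntegralForm 0 1 u (P i) (P j) := hf
  have key := polyIntegralForm_mul_right 0 1 u (r := X + 1) (s := C 2 * X)
    (fun t => by simp [u]) (P i) (P j)
  rw [add_mul, one_mul, mul_assoc, C_mul', hP.X_mul_eq hlead i, hP.X_mul_eq hlead j] at key
  simp only [map_add, map_smul, LinearMap.add_apply, LinearMap.smul_apply, smul_eq_mul, ← hF]
    at key
  linear_combination key
end

section
/- For nonnegative integers k and l, the series Σ_{i=0}^∞ f_{i,k} f_{i,l} converges and equals 0 if k ≠ l and equals 1/2 if k = l. -/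
open MeasureTheory Set Polynomial
open scoped InnerProductSpace

attribute [local instance] Measure.Subtype.measureSpace

/-!
The `P i` have degree `i`, so they span `ℝ[X]`, which by Weierstrass is dense in `C([-1, 1])` and
hence in `L²[-1, 1]`; being orthonormal, they form a Hilbert basis. If `g k` is `t ↦ P k (2t - 1)`
on `[0, 1]`, extended by zero to `[-1, 1]`, then `f i k = ⟪P i, g k⟫`, so Parseval gives
`Σ_i f i k * f i l = ⟪g k, g l⟫ = ∫₀¹ P k (2t - 1) P l (2t - 1) dt`, and the substitution
`u = 2t - 1` turns this into `δ_kl / 2`.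
-/

lemma ContinuousOn.memLp_restrict_of_isCompact {X E : Type*} [TopologicalSpace X] [T2Space X]
    [MeasurableSpace X] [OpensMeasurableSpace X] {μ : Measure X} [IsFiniteMeasureOnCompacts μ]
    [NormedAddCommGroup E] {p : ENNReal} {s : Set X} {f : X → E}
    (hs : IsCompact s) (hf : ContinuousOn f s) : MemLp f p (μ.restrict s) := by
  have : IsFiniteMeasure (μ.restrict s) := isFiniteMeasure_restrict.mpr hs.measure_lt_top.ne
  obtain ⟨C, hC⟩ := hs.exists_bound_of_continuousOn hf
  exact .of_bound (hf.aestronglyMeasurable_of_isCompact hs hs.measurableSet) C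
    (ae_restrict_of_forall_mem hs.measurableSet hC)

lemma intervalIntegral.integral_indicator_Ioi {E : Type*} [NormedAddCommGroup E]
    [NormedSpace ℝ E] {μ : Measure ℝ} {f : ℝ → E} {a b c : ℝ} (hac : a ≤ c) (hcb : c ≤ b) :
    ∫ x in a..b, (Ioi c).indicator f x ∂μ = ∫ x in c..b, f x ∂μ := by
  rw [integral_of_le (hac.trans hcb), integral_of_le hcb,
    MeasureTheory.integral_indicator measurableSet_Ioi, Measure.restrict_restrict measurableSet_Ioi,
    inter_comm, Ioc_inter_Ioi, sup_of_le_right hac]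

instance isFiniteMeasure_volume_Icc (a b : ℝ) : IsFiniteMeasure (volume : Measure (Icc a b)) :=
  ⟨by simp [Measure.Subtype.volume_univ nullMeasurableSet_Icc]⟩

lemma MeasureTheory.L2.inner_eq_intervalIntegral {a b : ℝ} (hab : a ≤ b)
    {u v : Lp ℝ 2 (volume : Measure (Icc a b))} {F G : ℝ → ℝ}
    (hu : u =ᵐ[volume] F ∘ Subtype.val) (hv : v =ᵐ[volume] G ∘ Subtype.val) :
    ⟪u, v⟫_ℝ = ∫ x in a..b, F x * G x := by
  rw [L2.inner_def, intervalIntegral.integral_of_le hab, ← integral_Icc_eq_integral_Ioc,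
    ← integral_subtype measurableSet_Icc]
  refine integral_congr_ae ?_
  filter_upwards [hu, hv] with x hux hvx
  rw [hux, hvx, real_inner_eq_re_inner, RCLike.inner_apply]
  simp [mul_comm]

namespace Polynomial

lemma span_range_eq_top_of_natDegree_eq {K : Type*} [Field K] (P : ℕ → K[X])
    (hdeg : ∀ n, (P n).natDegree = n) (hP : ∀ n, P n ≠ 0) :
    Submodule.span K (range P) = ⊤ :=
  Sequence.span ⟨P, fun n => by rw [degree_eq_natDegree (hP n), hdeg]⟩
    fun n => (leadingCoeff_ne_zero.mpr (hP n)).isUnit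

noncomputable def toLpIcc (a b : ℝ) : ℝ[X] →ₗ[ℝ] Lp ℝ 2 (volume : Measure (Icc a b)) :=
  (ContinuousMap.toLp 2 volume ℝ).toLinearMap ∘ₗ (toContinuousMapOnAlgHom (Icc a b)).toLinearMap

variable {a b : ℝ}

lemma coeFn_toLpIcc (p : ℝ[X]) : toLpIcc a b p =ᵐ[volume] (fun t => p.eval t) ∘ Subtype.val :=
  ContinuousMap.coeFn_toLp _ _

lemma denseRange_toLpIcc : DenseRange (toLpIcc a b) := by
  have hpoly : DenseRange (toContinuousMapOnAlgHom (R := ℝ) (Icc a b)) := by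
    rw [DenseRange, ← polynomialFunctions_coe, dense_iff_closure_eq,
      ← Subalgebra.topologicalClosure_coe, polynomialFunctions_closure_eq_top]
    rfl
  exact (ContinuousMap.toLp_denseRange ℝ volume (p := 2) ℝ ENNReal.ofNat_ne_top).comp hpoly
    (ContinuousMap.toLp 2 volume ℝ).continuous

variable {P : ℕ → ℝ[X]}

lemma exists_hilbertBasis_toLpIcc_of_orthonormal (hab : a ≤ b) (hdeg : ∀ n, (P n).natDegree = n)
    (horth : ∀ k l, ∫ t in a..b, (P k).eval t * (P l).eval t = if k = l then 1 else 0) :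
    ∃ B : HilbertBasis ℕ ℝ (Lp ℝ 2 (volume : Measure (Icc a b))),
      ∀ i, B i = toLpIcc a b (P i) := by
  have hP : ∀ n, P n ≠ 0 := fun n hn => by simpa [hn] using horth n n
  have hon : Orthonormal ℝ fun i => toLpIcc a b (P i) := orthonormal_iff_ite.mpr fun i j =>
    (L2.inner_eq_intervalIntegral hab (coeFn_toLpIcc _) (coeFn_toLpIcc _)).trans (horth i j)
  have hspan :
      Submodule.span ℝ (range fun i => toLpIcc a b (P i)) = LinearMap.range (toLpIcc a b) := by
    rw [range_comp', ← Submodule.map_span, span_range_eq_top_of_natDegree_eq P hdeg hP,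
      Submodule.map_top]
  have hdense : ⊤ ≤ (Submodule.span ℝ (range fun i => toLpIcc a b (P i))).topologicalClosure := by
    rw [hspan, top_le_iff, ← Submodule.dense_iff_topologicalClosure_eq_top, LinearMap.coe_range]
    exact denseRange_toLpIcc
  exact ⟨.mk hon hdense, congrFun (HilbertBasis.coe_mk hon hdense)⟩

theorem hasSum_intervalIntegral_mul_of_orthonormal (hab : a ≤ b)
    (hdeg : ∀ n, (P n).natDegree = n)
    (horth : ∀ k l, ∫ t in a..b, (P k).eval t * (P l).eval t = if k = l then 1 else 0)
    {F G : ℝ → ℝ} (hF : MemLp F 2 (volume.restrict (Icc a b)))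
    (hG : MemLp G 2 (volume.restrict (Icc a b))) :
    HasSum (fun i => (∫ t in a..b, (P i).eval t * F t) * ∫ t in a..b, (P i).eval t * G t)
      (∫ t in a..b, F t * G t) := by
  obtain ⟨B, hB⟩ := exists_hilbertBasis_toLpIcc_of_orthonormal hab hdeg horth
  have hval := measurePreserving_subtype_coe (μa := volume) (measurableSet_Icc (a := a) (b := b))
  have hF' := hF.comp_measurePreserving hval
  have hG' := hG.comp_measurePreserving hval
  have H := B.hasSum_inner_mul_inner (hF'.toLp _) (hG'.toLp _)
  rw [L2.inner_eq_intervalIntegral hab hF'.coeFn_toLp hG'.coeFn_toLp] at H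
  have hcoeff : ∀ i, ⟪hF'.toLp _, B i⟫_ℝ * ⟪B i, hG'.toLp _⟫_ℝ =
      (∫ t in a..b, (P i).eval t * F t) * ∫ t in a..b, (P i).eval t * G t := fun i => by
    rw [real_inner_comm, hB,
      L2.inner_eq_intervalIntegral hab (coeFn_toLpIcc (P i)) hF'.coeFn_toLp,
      L2.inner_eq_intervalIntegral hab (coeFn_toLpIcc (P i)) hG'.coeFn_toLp]
  simpa only [hcoeff] using H

end Polynomial

theorem stmt_4_general
    (P : ℕ → Polynomial ℝ)
    (hdeg : ∀ n, (P n).natDegree = n)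
    (horth : ∀ k l, (∫ t in (-1:ℝ)..1, (P k).eval t * (P l).eval t) =
      if k = l then 1 else 0)
    (f : ℕ → ℕ → ℝ)
    (hf : ∀ i j, f i j = ∫ t in (0:ℝ)..1, (P i).eval t * (P j).eval (2 * t - 1))
    (k l : ℕ) :
    HasSum (fun i : ℕ => f i k * f i l) (if k = l then 1 / 2 else 0) := by
  set F : ℕ → ℝ → ℝ := fun j => (Ioi 0).indicator fun t => (P j).eval (2 * t - 1) with hF_def
  have hF : ∀ j, MemLp (F j) 2 (volume.restrict (Icc (-1) 1)) := fun j =>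
    (ContinuousOn.memLp_restrict_of_isCompact isCompact_Icc
      (by fun_prop : Continuous fun t => (P j).eval (2 * t - 1)).continuousOn).indicator
      measurableSet_Ioi
  have hcross : ∀ i j, ∫ t in (-1)..1, (P i).eval t * F j t = f i j := fun i j => by
    simp only [hF_def, hf, ← indicator_mul_right (Ioi 0) (fun t => (P i).eval t)]
    exact intervalIntegral.integral_indicator_Ioi (by norm_num) zero_le_one
  have hself : ∫ t in (-1)..1, F k t * F l t = if k = l then 1 / 2 else 0 := by
    simp only [hF_def, ← indicator_mul]
    rw [intervalIntegral.integral_indicator_Ioi (by norm_num) zero_le_one,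
      intervalIntegral.integral_comp_mul_sub (fun u => (P k).eval u * (P l).eval u) two_ne_zero]
    norm_num [horth]
  simpa only [hcross, hself] using
    hasSum_intervalIntegral_mul_of_orthonormal (by norm_num) hdeg horth (hF k) (hF l)

/-- the series `Σ_i f_{i,k} f_{i,l}` converges and equals
`0` for `k ≠ l` and `1/2` for `k = l`. -/
theorem stmt_4
    (P : ℕ → Polynomial ℝ)
    (hdeg : ∀ n, (P n).natDegree = n)
    (hlead : ∀ n, 0 < (P n).leadingCoeff)
    (horth : ∀ k l, (∫ t in (-1:ℝ)..1, (P k).eval t * (P l).eval t) =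
      if k = l then 1 else 0)
    (f : ℕ → ℕ → ℝ)
    (hf : ∀ i j, f i j = ∫ t in (0:ℝ)..1, (P i).eval t * (P j).eval (2 * t - 1))
    (k l : ℕ) :
    HasSum (fun i : ℕ => f i k * f i l) (if k = l then 1 / 2 else 0) :=
  stmt_4_general P hdeg horth f hf k l
end

section
/- Let λ > 0. For all nonnegative integers k and l, the series Σ_{i=0}^∞ f^{(λ)}_{i,k} f^{(λ)}_{i,l} converges and equals ∫_0^1 p̂_k^{(λ)}(2x−1) p̂_l^{(λ)}(2x−1) x^{2λ−1} ((1−x)/(1+x))^{λ−1/2} dx. -/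
open MeasureTheory Set Polynomial
open scoped ENNReal InnerProductSpace

/-!
Let `μ` be the Gegenbauer measure `(1 - t²)^(λ - 1/2) dt` on `(-1, 1)`. It is finite and compactly
supported, so polynomials are dense in `L²(μ)` (Weierstrass), and the orthonormal `p̂ₙ` form a
Hilbert basis. Since `(1 - t²) · t / (1 + t) = t (1 - t)`, the coefficient `f_{i,j}` is the inner
product of `p̂ᵢ` with `g_j(t) = 1_{(0,1)}(t) p̂_j(2t - 1) (t / (1 + t))^(λ - 1/2)`, which lies in
`L²(μ)` as `λ > 0`. Parseval's identity `∑ᵢ ⟪g_k, p̂ᵢ⟫ ⟪p̂ᵢ, g_l⟫ = ⟪g_k, g_l⟫` is the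
claim, as `(t / (1 + t))² (1 - t²) = t² (1 - t) / (1 + t)`.
-/

theorem integrableOn_Ioo_sub_rpow_mul_sub_rpow {x y a b : ℝ} (ha : -1 < a) (hb : -1 < b) :
    IntegrableOn (fun t => (t - x) ^ a * (y - t) ^ b) (Ioo x y) := by
  rcases le_or_gt y x with hyx | hxy
  · simp [Ioo_eq_empty (not_lt.mpr hyx)]
  obtain ⟨m, hxm, hmy⟩ := exists_between hxy
  have left : IntegrableOn (fun t => (t - x) ^ a * (y - t) ^ b) (Icc x m) := by
    have h := (intervalIntegral.intervalIntegrable_rpow' (a := 0) (b := m - x) ha).comp_sub_right x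
    rw [zero_add, sub_add_cancel, intervalIntegrable_iff_integrableOn_Icc_of_le hxm.le] at h
    refine h.mul_continuousOn (ContinuousOn.rpow_const (f := fun t => y - t) (by fun_prop)
      fun t ht => Or.inl ?_) isCompact_Icc
    linarith [ht.2]
  have right : IntegrableOn (fun t => (t - x) ^ a * (y - t) ^ b) (Icc m y) := by
    have h := (intervalIntegral.intervalIntegrable_rpow' (a := y - m) (b := 0) hb).comp_sub_left y
    rw [sub_sub_cancel, sub_zero, intervalIntegrable_iff_integrableOn_Icc_of_le hmy.le] at h
    refine h.continuousOn_mul (ContinuousOn.rpow_const (f := fun t => t - x) (by fun_prop)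
      fun t ht => Or.inl ?_) isCompact_Icc
    linarith [ht.1]
  exact (left.union right).mono_set fun t ht => by
    rcases le_total t m with h | h
    exacts [Or.inl ⟨ht.1.le, h⟩, Or.inr ⟨h, ht.2.le⟩]

theorem MeasureTheory.L2.inner_eq_integral_of_ae_eq {α : Type*} [MeasurableSpace α]
    {μ : Measure α} {x y : Lp ℝ 2 μ} {φ ψ : α → ℝ} (hx : x =ᵐ[μ] φ) (hy : y =ᵐ[μ] ψ) :
    ⟪x, y⟫_ℝ = ∫ t, φ t * ψ t ∂μ := by
  rw [L2.inner_def]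
  refine integral_congr_ae ?_
  filter_upwards [hx, hy] with t hxt hyt
  rw [hxt, hyt, real_inner_eq_re_inner, RCLike.inner_apply, conj_trivial, mul_comm]
  rfl

section PolynomialsInL2

variable {μ : Measure ℝ} [IsFiniteMeasure μ] {a b : ℝ}

theorem Polynomial.memLp_eval_of_ae_mem_Icc (hμ : ∀ᵐ t ∂μ, t ∈ Icc a b) (q : ℝ[X])
    (p : ℝ≥0∞) : MemLp (fun t => q.eval t) p μ := by
  obtain ⟨C, hC⟩ := isCompact_Icc.exists_bound_of_continuousOn q.continuous.continuousOn
  exact MemLp.of_bound q.continuous.aestronglyMeasurable C (hμ.mono fun t ht => hC t ht)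

noncomputable def Polynomial.toL2 (hμ : ∀ᵐ t ∂μ, t ∈ Icc a b) : ℝ[X] →ₗ[ℝ] Lp ℝ 2 μ where
  toFun q := (memLp_eval_of_ae_mem_Icc hμ q 2).toLp fun t => q.eval t
  map_add' _ _ :=
    (MemLp.toLp_congr _ _ (ae_of_all _ fun _ => eval_add)).trans (MemLp.toLp_add _ _)
  map_smul' r _ :=
    (MemLp.toLp_congr _ _ (ae_of_all _ fun _ => eval_smul ..)).trans (MemLp.toLp_const_smul r _)

theorem Polynomial.coeFn_toL2 (hμ : ∀ᵐ t ∂μ, t ∈ Icc a b) (q : ℝ[X]) :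
    toL2 hμ q =ᵐ[μ] fun t => q.eval t :=
  MemLp.coeFn_toLp (memLp_eval_of_ae_mem_Icc hμ q 2)

theorem Polynomial.denseRange_toL2 (hμ : ∀ᵐ t ∂μ, t ∈ Icc a b) : DenseRange (toL2 hμ) := by
  refine dense_closure.mp ((BoundedContinuousFunction.toLp_denseRange (p := 2) ℝ μ ℝ
    ENNReal.ofNat_ne_top).mono ?_)
  rintro _ ⟨F, rfl⟩
  refine Metric.mem_closure_iff.mpr fun ε hε => ?_
  set M : ℝ := measureUnivNNReal μ ^ (2 : ℝ≥0∞).toReal⁻¹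
  have hM : 0 ≤ M := by positivity
  have hδ : 0 < ε / (M + 1) := by positivity
  obtain ⟨q, hq⟩ := exists_polynomial_near_of_continuousOn a b F F.continuous.continuousOn _ hδ
  refine ⟨toL2 hμ q, mem_range_self q, ?_⟩
  rw [dist_comm, dist_eq_norm]
  calc ‖toL2 hμ q - BoundedContinuousFunction.toLp 2 μ ℝ F‖ ≤ M * (ε / (M + 1)) := by
        refine Lp.norm_le_of_ae_bound hδ.le ?_
        filter_upwards [hμ, Lp.coeFn_sub (toL2 hμ q) (BoundedContinuousFunction.toLp 2 μ ℝ F),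
          coeFn_toL2 hμ q, BoundedContinuousFunction.coeFn_toLp 2 μ ℝ F] with t ht hsub hq' hF
        rw [hsub, Pi.sub_apply, hq', hF, Real.norm_eq_abs]
        exact (hq t ht).le
    _ < ε := by
        rw [mul_div_left_comm]
        exact mul_lt_of_lt_one_right hε ((div_lt_one (by linarith)).mpr (by linarith))

theorem Polynomial.hasSum_inner_toL2_mul_inner_toL2 (hμ : ∀ᵐ t ∂μ, t ∈ Icc a b)
    {P : ℕ → ℝ[X]} (hspan : Submodule.span ℝ (range P) = ⊤)
    (hP : Orthonormal ℝ fun n => toL2 hμ (P n)) (x y : Lp ℝ 2 μ) :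
    HasSum (fun n => ⟪x, toL2 hμ (P n)⟫_ℝ * ⟪toL2 hμ (P n), y⟫_ℝ) ⟪x, y⟫_ℝ := by
  have hdense : ⊤ ≤ (Submodule.span ℝ (range fun n => toL2 hμ (P n))).topologicalClosure := by
    rw [range_comp' (toL2 hμ) P, ← Submodule.map_span, hspan, Submodule.map_top,
      Submodule.dense_iff_topologicalClosure_eq_top.mp (by exact denseRange_toL2 hμ)]
  simpa using (HilbertBasis.mk hP hdense).hasSum_inner_mul_inner x y

end PolynomialsInL2

theorem rpow_div_one_add_mul_rpow_one_sub_sq {c t : ℝ} (ht : t ∈ Icc 0 1) :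
    (t / (1 + t)) ^ c * (1 - t ^ 2) ^ c = (t * (1 - t)) ^ c := by
  obtain ⟨ht0, ht1⟩ := ht
  rw [← Real.mul_rpow (by positivity) (by nlinarith)]
  congr 1
  field_simp
  ring

theorem rpow_div_one_add_sq_mul_rpow_one_sub_sq {lam t : ℝ} (ht : t ∈ Icc 0 1) :
    (t / (1 + t)) ^ (lam - 1 / 2) * (t / (1 + t)) ^ (lam - 1 / 2) * (1 - t ^ 2) ^ (lam - 1 / 2) =
      t ^ (2 * lam - 1) * ((1 - t) / (1 + t)) ^ (lam - 1 / 2) := by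
  obtain ⟨ht0, ht1⟩ := ht
  rw [mul_assoc, rpow_div_one_add_mul_rpow_one_sub_sq ⟨ht0, ht1⟩,
    show 2 * lam - 1 = 2 * (lam - 1 / 2) by ring, Real.rpow_mul ht0, Real.rpow_two,
    ← Real.mul_rpow (by positivity) (by nlinarith), ← Real.mul_rpow (by positivity)
      (div_nonneg (by linarith) (by linarith))]
  congr 1
  field_simp

theorem integrableOn_mul_rpow_mul_div_rpow {lam : ℝ} (hlam : 0 < lam) {φ : ℝ → ℝ}
    (hφ : ContinuousOn φ (Icc 0 1)) :
    IntegrableOn (fun t => φ t * t ^ (2 * lam - 1) * ((1 - t) / (1 + t)) ^ (lam - 1 / 2))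
      (Icc 0 1) := by
  have h := integrableOn_Ioo_sub_rpow_mul_sub_rpow (x := 0) (y := 1)
    (show -1 < 2 * lam - 1 by linarith) (show -1 < lam - 1 / 2 by linarith)
  rw [← integrableOn_Icc_iff_integrableOn_Ioo] at h
  have hpow : ContinuousOn (fun t : ℝ => (1 + t) ^ (-(lam - 1 / 2))) (Icc 0 1) :=
    ContinuousOn.rpow_const (by fun_prop) fun t ht => Or.inl (by linarith [ht.1])
  refine (h.continuousOn_mul (hφ.mul hpow) isCompact_Icc).congr_fun (fun t ht => ?_)
    measurableSet_Icc
  obtain ⟨ht0, ht1⟩ := ht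
  simp only [Pi.mul_apply, sub_zero]
  rw [Real.div_rpow (by linarith) (by linarith), Real.rpow_neg (by linarith)]
  ring

noncomputable def gegenbauerMeasure (lam : ℝ) : Measure ℝ :=
  (volume.restrict (Ioo (-1) 1)).withDensity fun t => ENNReal.ofReal ((1 - t ^ 2) ^ (lam - 1 / 2))

namespace gegenbauerMeasure

variable {lam : ℝ} {s : Set ℝ}

theorem ae_mem_Icc (lam : ℝ) : ∀ᵐ t ∂gegenbauerMeasure lam, t ∈ Icc (-1) 1 :=
  (withDensity_absolutelyContinuous _ _).ae_le
    ((ae_restrict_mem measurableSet_Ioo).mono fun _ => mem_Icc_of_Ioo)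

theorem measurable_density (lam : ℝ) :
    Measurable fun t : ℝ => ENNReal.ofReal ((1 - t ^ 2) ^ (lam - 1 / 2)) := by
  fun_prop

theorem toReal_density {t : ℝ} (ht : t ∈ Ioo (-1) 1) :
    (ENNReal.ofReal ((1 - t ^ 2) ^ (lam - 1 / 2))).toReal = (1 - t ^ 2) ^ (lam - 1 / 2) :=
  ENNReal.toReal_ofReal (Real.rpow_nonneg (by nlinarith [ht.1, ht.2]) _)

theorem setIntegral_eq (hs : MeasurableSet s) (φ : ℝ → ℝ) :
    ∫ t in s, φ t ∂gegenbauerMeasure lam =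
      ∫ t in s ∩ Ioo (-1) 1, φ t * (1 - t ^ 2) ^ (lam - 1 / 2) := by
  rw [gegenbauerMeasure, restrict_withDensity hs,
    integral_withDensity_eq_integral_toReal_smul (measurable_density lam)
      (ae_of_all _ fun _ => ENNReal.ofReal_lt_top), Measure.restrict_restrict hs]
  refine setIntegral_congr_fun (hs.inter measurableSet_Ioo) fun t ht => ?_
  rw [toReal_density ht.2, smul_eq_mul, mul_comm]

theorem integrableOn_iff (hs : MeasurableSet s) (φ : ℝ → ℝ) :
    IntegrableOn φ s (gegenbauerMeasure lam) ↔
      IntegrableOn (fun t => φ t * (1 - t ^ 2) ^ (lam - 1 / 2)) (s ∩ Ioo (-1) 1) := by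
  rw [IntegrableOn, gegenbauerMeasure, restrict_withDensity hs,
    integrable_withDensity_iff (measurable_density lam)
      (ae_of_all _ fun _ => ENNReal.ofReal_lt_top), Measure.restrict_restrict hs]
  exact integrableOn_congr_fun (fun t ht => by rw [toReal_density ht.2])
    (hs.inter measurableSet_Ioo)

theorem isFiniteMeasure (hlam : -1 / 2 < lam) : IsFiniteMeasure (gegenbauerMeasure lam) := by
  have h := integrableOn_Ioo_sub_rpow_mul_sub_rpow (x := -1) (y := 1)
    (show -1 < lam - 1 / 2 by linarith) (show -1 < lam - 1 / 2 by linarith)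
  refine isFiniteMeasure_withDensity_ofReal (h.congr_fun (fun t ht => ?_) measurableSet_Ioo).2
  rw [← Real.mul_rpow (by linarith [ht.1]) (by linarith [ht.2])]
  ring_nf

theorem integral_eq (φ : ℝ → ℝ) :
    ∫ t, φ t ∂gegenbauerMeasure lam = ∫ t in (-1)..1, φ t * (1 - t ^ 2) ^ (lam - 1 / 2) := by
  rw [← setIntegral_univ, setIntegral_eq MeasurableSet.univ, univ_inter,
    intervalIntegral.integral_of_le (by norm_num), integral_Ioc_eq_integral_Ioo]

theorem integral_indicator_Ioo_zero_one (F : ℝ → ℝ) :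
    ∫ t, (Ioo 0 1).indicator F t ∂gegenbauerMeasure lam =
      ∫ t in (0 : ℝ)..1, F t * (1 - t ^ 2) ^ (lam - 1 / 2) := by
  rw [integral_indicator measurableSet_Ioo, setIntegral_eq measurableSet_Ioo,
    inter_eq_left.mpr (Ioo_subset_Ioo_left (by norm_num)),
    intervalIntegral.integral_of_le zero_le_one, integral_Ioc_eq_integral_Ioo]

theorem memLp_indicator (hlam : 0 < lam) {φ : ℝ → ℝ} (hφ : Continuous φ) :
    MemLp ((Ioo 0 1).indicator fun t => φ t * (t / (1 + t)) ^ (lam - 1 / 2)) 2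
      (gegenbauerMeasure lam) := by
  have hmeas : Measurable fun t => φ t * (t / (1 + t)) ^ (lam - 1 / 2) :=
    hφ.measurable.mul ((measurable_id.div (measurable_const.add measurable_id)).pow_const _)
  rw [memLp_indicator_iff_restrict measurableSet_Ioo,
    memLp_two_iff_integrable_sq hmeas.aestronglyMeasurable, ← IntegrableOn,
    integrableOn_iff measurableSet_Ioo, inter_eq_left.mpr (Ioo_subset_Ioo_left (by norm_num))]
  refine ((integrableOn_mul_rpow_mul_div_rpow hlam (φ := fun t => φ t ^ 2)
    (by fun_prop)).mono_set Ioo_subset_Icc_self).congr_fun (fun t ht => ?_) measurableSet_Ioo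
  dsimp only
  rw [mul_assoc (φ t ^ 2), ← rpow_div_one_add_sq_mul_rpow_one_sub_sq (Ioo_subset_Icc_self ht)]
  ring

theorem integral_mul_indicator (ψ φ : ℝ → ℝ) :
    ∫ t, ψ t * (Ioo 0 1).indicator (fun t => φ t * (t / (1 + t)) ^ (lam - 1 / 2)) t
        ∂gegenbauerMeasure lam =
      ∫ t in (0 : ℝ)..1, ψ t * φ t * (t * (1 - t)) ^ (lam - 1 / 2) := by
  simp_rw [← indicator_mul_right, integral_indicator_Ioo_zero_one]
  refine intervalIntegral.integral_congr fun t ht => ?_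
  rw [uIcc_of_le zero_le_one] at ht
  simp only [mul_assoc, rpow_div_one_add_mul_rpow_one_sub_sq ht]

theorem integral_indicator_mul_indicator (φ ψ : ℝ → ℝ) :
    ∫ t, (Ioo 0 1).indicator (fun t => φ t * (t / (1 + t)) ^ (lam - 1 / 2)) t *
        (Ioo 0 1).indicator (fun t => ψ t * (t / (1 + t)) ^ (lam - 1 / 2)) t
        ∂gegenbauerMeasure lam =
      ∫ t in (0 : ℝ)..1,
        φ t * ψ t * t ^ (2 * lam - 1) * ((1 - t) / (1 + t)) ^ (lam - 1 / 2) := by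
  simp_rw [← indicator_mul, integral_indicator_Ioo_zero_one]
  refine intervalIntegral.integral_congr fun t ht => ?_
  rw [uIcc_of_le zero_le_one] at ht
  rw [mul_assoc (φ t * ψ t), ← rpow_div_one_add_sq_mul_rpow_one_sub_sq ht]
  ring

end gegenbauerMeasure

/-- for `λ > 0`, the series `Σ_i f^{(λ)}_{i,k} f^{(λ)}_{i,l}`
converges to
`∫_0^1 p̂_k^{(λ)}(2x-1) p̂_l^{(λ)}(2x-1) x^{2λ-1} ((1-x)/(1+x))^{λ-1/2} dx`. -/
theorem stmt_8
    (lam : ℝ) (hlam : lam > 0)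
    (P : ℕ → Polynomial ℝ)
    (hdeg : ∀ n, (P n).natDegree = n)
    (hlead : ∀ n, 0 < (P n).leadingCoeff)
    (horth : ∀ k l, (∫ t in (-1:ℝ)..1,
        (P k).eval t * (P l).eval t * (1 - t ^ 2) ^ (lam - 1 / 2)) =
      if k = l then 1 else 0)
    (f : ℕ → ℕ → ℝ)
    (hf : ∀ i j, f i j = ∫ t in (0:ℝ)..1,
      (P i).eval t * (P j).eval (2 * t - 1) * (t * (1 - t)) ^ (lam - 1 / 2))
    (k l : ℕ) :
    HasSum (fun i : ℕ => f i k * f i l)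
      (∫ x in (0:ℝ)..1,
        (P k).eval (2 * x - 1) * (P l).eval (2 * x - 1) * x ^ (2 * lam - 1) *
          ((1 - x) / (1 + x)) ^ (lam - 1 / 2)) := by
  have := gegenbauerMeasure.isFiniteMeasure (by linarith : -1 / 2 < lam)
  have hμ := gegenbauerMeasure.ae_mem_Icc lam
  have hspan : Submodule.span ℝ (range P) = ⊤ :=
    Sequence.span ⟨P, fun n => by
      rw [degree_eq_natDegree (leadingCoeff_ne_zero.mp (hlead n).ne'), hdeg]⟩
      fun n => (hlead n).ne'.isUnit
  have hP : Orthonormal ℝ fun n => toL2 hμ (P n) := by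
    refine orthonormal_iff_ite.mpr fun i j => ?_
    rw [L2.inner_eq_integral_of_ae_eq (coeFn_toL2 hμ _) (coeFn_toL2 hμ _),
      gegenbauerMeasure.integral_eq, horth]
  have hG (j : ℕ) := gegenbauerMeasure.memLp_indicator hlam (φ := fun t => (P j).eval (2 * t - 1))
    (by fun_prop)
  set g := fun j => (hG j).toLp _
  have hgP (i j : ℕ) : ⟪g j, toL2 hμ (P i)⟫_ℝ = f i j := by
    rw [real_inner_comm, L2.inner_eq_integral_of_ae_eq (coeFn_toL2 hμ _) (hG j).coeFn_toLp,
      gegenbauerMeasure.integral_mul_indicator, hf]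
  convert hasSum_inner_toL2_mul_inner_toL2 hμ hspan hP (g k) (g l) using 1
  · ext i
    rw [hgP, real_inner_comm, hgP]
  · rw [L2.inner_eq_integral_of_ae_eq (hG k).coeFn_toLp (hG l).coeFn_toLp,
      gegenbauerMeasure.integral_indicator_mul_indicator]
end
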